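/- arXiv:2111.03266 — 2 statements merged into one kernel-verified Lean document; each statement's English description precedes it below -/
import Mathlib

section
/- Let κ be a nonzero real number, a = iκ, and c = −4κ². Then for any complex p₁ with p₁² ≠ −κ², the complex number p₂ = (4κ²p₁ + iκ(p₁² − 3κ²))/(κ² + p₁²) satisfies (p₁² + κ²)(p₂² + κ²) = −2c(p₁p₂ − κ²). -/
/-!
Writing `a = iκ`, so that `κ² = -a²` and `c = 4a²`, the prescribed `p₂` is the Möbius image
`p₂ = a (p₁ - 3a) / (p₁ + a)` of `p₁`, and for such a pair the constraint reads
`(p₁² - a²)(p₂² - a²) = -8a²(p₁p₂ + a²)`. Its two sides differ by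
`((p₁ - a) p₂ + a (p₁ + 3a)) (p₂ (p₁ + a) - a (p₁ - 3a))`.
-/

theorem sq_sub_sq_mul_sq_sub_sq_eq_of_mul_add_eq {R : Type*} [CommRing R] (a p q : R)
    (hq : q * (p + a) = a * (p - 3 * a)) :
    (p ^ 2 - a ^ 2) * (q ^ 2 - a ^ 2) = -8 * a ^ 2 * (p * q + a ^ 2) := by
  linear_combination ((p - a) * q + a * (p + 3 * a)) * hq

theorem stmt_1_general (κ : ℝ) (a c : ℂ) (ha : a = Complex.I * κ)
    (hc : c = -4 * (κ : ℂ) ^ 2) (p₁ : ℂ) (hp₁ : p₁ ^ 2 ≠ -(κ : ℂ) ^ 2) :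
    (p₁ ^ 2 + (κ : ℂ) ^ 2) *
        (((4 * (κ : ℂ) ^ 2 * p₁ + Complex.I * κ * (p₁ ^ 2 - 3 * (κ : ℂ) ^ 2)) /
            ((κ : ℂ) ^ 2 + p₁ ^ 2)) ^ 2 + (κ : ℂ) ^ 2) =
      -2 * c * (p₁ * ((4 * (κ : ℂ) ^ 2 * p₁ + Complex.I * κ * (p₁ ^ 2 - 3 * (κ : ℂ) ^ 2)) /
            ((κ : ℂ) ^ 2 + p₁ ^ 2)) - (κ : ℂ) ^ 2) := by
  rw [← ha]
  have hκ_sq : (κ : ℂ) ^ 2 = -a ^ 2 := by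
    rw [ha, mul_pow, Complex.I_sq]
    ring
  subst hc
  rw [hκ_sq] at hp₁ ⊢
  have hden : -a ^ 2 + p₁ ^ 2 ≠ 0 := fun h ↦ hp₁ (by linear_combination h)
  set p₂ := (4 * -a ^ 2 * p₁ + a * (p₁ ^ 2 - 3 * -a ^ 2)) / (-a ^ 2 + p₁ ^ 2)
  have hp₂ : p₂ * (p₁ + a) = a * (p₁ - 3 * a) := by
    rw [div_mul_eq_mul_div, div_eq_iff hden]
    ring
  linear_combination sq_sub_sq_mul_sq_sub_sq_eq_of_mul_add_eq a p₁ p₂ hp₂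

theorem stmt_1 (κ : ℝ) (hκ : κ ≠ 0) (a c : ℂ) (ha : a = Complex.I * κ)
    (hc : c = -4 * (κ : ℂ) ^ 2) (p₁ : ℂ) (hp₁ : p₁ ^ 2 ≠ -(κ : ℂ) ^ 2) :
    (p₁ ^ 2 + (κ : ℂ) ^ 2) *
        (((4 * (κ : ℂ) ^ 2 * p₁ + Complex.I * κ * (p₁ ^ 2 - 3 * (κ : ℂ) ^ 2)) /
            ((κ : ℂ) ^ 2 + p₁ ^ 2)) ^ 2 + (κ : ℂ) ^ 2) =
      -2 * c * (p₁ * ((4 * (κ : ℂ) ^ 2 * p₁ + Complex.I * κ * (p₁ ^ 2 - 3 * (κ : ℂ) ^ 2)) /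
            ((κ : ℂ) ^ 2 + p₁ ^ 2)) - (κ : ℂ) ^ 2) :=
  stmt_1_general κ a c ha hc p₁ hp₁
end

section
/- Let N ≥ 1 and suppose complex parameters p_{im} (1 ≤ i ≤ 2N, m = 1,2) satisfy p_{N+l,m} = conj(p_{lm}) for 1 ≤ l ≤ N, with all p_{im} + p_{jn} ≠ 0, and let a = iκ with κ real. Then the 2N×2N matrix M with entries M_{ij} = Σ_{m,n=1}^{2} (1/(p_{im}+p_{jn})) · exp(ξ_{im} + ξ_{jn}), where ξ_{im} = p_{im} x + p_{im}³ t + ξ_{im,0} and ξ_{N+l,m,0} = conj(ξ_{lm,0}), has real determinant for all real x, t. -/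
/-!
Complex conjugation maps `p i m` and `ξ₀ i m` to `p (swap i) m` and `ξ₀ (swap i) m`, and `x, t`
are real, so it maps each entry `M i j` to `M (swap i) (swap j)`. Hence `conj (det M)` is the
determinant of `M` conjugated by a permutation matrix, which is `det M`.
-/

theorem Matrix.star_det_eq_of_map_star_eq_submatrix {R n : Type*} [CommRing R] [StarRing R]
    [Fintype n] [DecidableEq n] (M : Matrix n n R) (e : Equiv.Perm n)
    (h : M.map star = M.submatrix e e) : star M.det = M.det := by
  have : star M.det = (M.map star).det := RingHom.map_det (starRingEnd R) M
  rw [this, h, Matrix.det_submatrix_equiv_self]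

theorem Sum.apply_swap_eq_star {ι α R : Type*} [InvolutiveStar R] {f : ι ⊕ ι → α → R}
    (hf : ∀ l a, f (Sum.inr l) a = star (f (Sum.inl l) a)) (i : ι ⊕ ι) (a : α) :
    f i.swap a = star (f i a) := by
  rcases i with l | l
  · exact hf l a
  · rw [Sum.swap_inr, hf, star_star]

theorem Complex.star_one_div_mul_exp_phase (x t : ℝ) (p q ζ η : ℂ) :
    star (1 / (p + q) * exp ((p * x + p ^ 3 * t + ζ) + (q * x + q ^ 3 * t + η))) =
      1 / (star p + star q) *
        exp ((star p * x + star p ^ 3 * t + star ζ) + (star q * x + star q ^ 3 * t + star η)) := by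
  simp only [star_def, map_mul, map_div₀, map_one, map_add, map_pow, ← exp_conj, conj_ofReal]

theorem stmt_4_general (N : ℕ)
    (p : (Fin N ⊕ Fin N) → Fin 2 → ℂ) (ξ₀ : (Fin N ⊕ Fin N) → Fin 2 → ℂ)
    (hp : ∀ l m, p (Sum.inr l) m = starRingEnd ℂ (p (Sum.inl l) m))
    (hξ₀ : ∀ l m, ξ₀ (Sum.inr l) m = starRingEnd ℂ (ξ₀ (Sum.inl l) m))
    (x t : ℝ) :
    ((Matrix.of fun i j : Fin N ⊕ Fin N =>
        ∑ m : Fin 2, ∑ n : Fin 2,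
          (1 / (p i m + p j n)) *
            Complex.exp ((p i m * x + (p i m) ^ 3 * t + ξ₀ i m) +
              (p j n * x + (p j n) ^ 3 * t + ξ₀ j n))).det).im = 0 := by
  refine Complex.conj_eq_iff_im.mp (Matrix.star_det_eq_of_map_star_eq_submatrix _
    (Equiv.sumComm (Fin N) (Fin N)) ?_)
  ext i j
  simp only [Matrix.map_apply, Matrix.submatrix_apply, Matrix.of_apply, Equiv.sumComm_apply,
    star_sum, Complex.star_one_div_mul_exp_phase,
    Sum.apply_swap_eq_star hp, Sum.apply_swap_eq_star hξ₀]

theorem stmt_4 (N : ℕ) (hN : 1 ≤ N) (κ : ℝ) (a : ℂ) (ha : a = Complex.I * κ)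
    (p : (Fin N ⊕ Fin N) → Fin 2 → ℂ) (ξ₀ : (Fin N ⊕ Fin N) → Fin 2 → ℂ)
    (hp : ∀ l m, p (Sum.inr l) m = starRingEnd ℂ (p (Sum.inl l) m))
    (hξ₀ : ∀ l m, ξ₀ (Sum.inr l) m = starRingEnd ℂ (ξ₀ (Sum.inl l) m))
    (hsum : ∀ i j m n, p i m + p j n ≠ 0) (x t : ℝ) :
    ((Matrix.of fun i j : Fin N ⊕ Fin N =>
        ∑ m : Fin 2, ∑ n : Fin 2,
          (1 / (p i m + p j n)) *
            Complex.exp ((p i m * x + (p i m) ^ 3 * t + ξ₀ i m) +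
              (p j n * x + (p j n) ^ 3 * t + ξ₀ j n))).det).im = 0 :=
  stmt_4_general N p ξ₀ hp hξ₀ x t
end
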